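/- arXiv:2508.10756 — 3 statements merged into one kernel-verified Lean document; each statement's English description precedes it below -/
import Mathlib

section
/- Let n ≥ 1 and let H be any subgroup of D_{2n} isomorphic to a dihedral group (equivalently, any subgroup of D_{2n} containing a reflection ba^i). Then (D_{2n}, H) is a strong Gelfand pair. In particular, for every divisor m of n, the dihedral subgroup D_{2m} ≤ D_{2n} is a strong Gelfand subgroup. -/
/-!
An irreducible finite-dimensional representation `V` of a dihedral group is spanned by an
eigenvector `v` of the rotation `r 1` together with its image under any reflection `sr i`,
so `dim V ≤ 2`, and `dim V = 1` as soon as some reflection acts by a scalar. Let `W` be an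
irreducible representation of `H`. If `dim V ≤ dim W`, a nonzero `H`-map `W → V` is an
isomorphism and Schur's lemma bounds the multiplicity by one. Otherwise
`dim W = 1 < dim V = 2`, and multiplicity two would make evaluation at a nonzero vector of `W`
an isomorphism `Hom_H(W, V) ≃ V`; then `H` acts on `V` through the character of `W`, so the
reflection `sr i ∈ H` acts by a scalar, forcing `dim V = 1`.
-/

open CategoryTheory

/-- `(G, H)` is a strong Gelfand pair: the restriction to `H` of every irreducible
complex representation of `G` is multiplicity-free, i.e. every irreducible
complex representation of `H` occurs in it with multiplicity at most one
(equivalently, by Frobenius reciprocity, every irreducible character of `H`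
induces to a multiplicity-free character of `G`). -/
def IsStrongGelfandPair (G : Type) [Group G] (H : Subgroup G) : Prop :=
  ∀ (V : FDRep ℂ G) (W : FDRep ℂ H), Simple V → Simple W →
    Module.finrank ℂ (W ⟶ (Action.res (FGModuleCat ℂ) H.subtype).obj V) ≤ 1

open Module

variable {k : Type} [Field k]

theorem Representation.apply_zpow_eq_zpow_smul {G V : Type*} [Group G] [AddCommGroup V]
    [Module k V] (ρ : Representation k G V) {g : G} {v : V} {ω : k} (hv : ρ g v = ω • v)
    (m : ℤ) : ρ (g ^ m) v = ω ^ m • v := by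
  rcases eq_or_ne ω 0 with rfl | hω
  -- `ρ g` is invertible, so `ω = 0` forces `v = 0` and the junk value `0 ^ m` is harmless.
  · have hv0 : v = 0 := by simpa [hv] using (ρ.inv_self_apply g v).symm
    simp [hv0]
  have hinv : ρ g⁻¹ v = ω⁻¹ • v := by
    rw [eq_inv_smul_iff₀ hω, ← map_smul, ← hv, inv_self_apply]
  induction m using Int.induction_on with
  | zero => simp
  | succ m ih =>
    rw [zpow_add_one, map_mul, Module.End.mul_apply, hv, map_smul, ih, smul_smul,
      zpow_add_one₀ hω, mul_comm]
  | pred m ih =>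
    rw [zpow_sub_one, map_mul, Module.End.mul_apply, hinv, map_smul, ih, smul_smul,
      zpow_sub_one₀ hω, mul_comm]

namespace FDRep

variable {G : Type} [Group G]

theorem hom_comm_apply {V W : FDRep k G} (f : V ⟶ W) (g : G) (x : V) :
    f (V.ρ g x) = W.ρ g (f x) :=
  congr($(f.comm g) x)

instance nontrivial_of_simple (V : FDRep k G) [Simple V] : Nontrivial V := by
  by_contra h
  rw [not_nontrivial_iff_subsingleton] at h
  exact id_nonzero V (by ext x; exact Subsingleton.elim _ _)

theorem eq_bot_or_eq_top_of_forall_apply_mem (V : FDRep k G) [Simple V] {U : Submodule k V}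
    (hU : ∀ g, ∀ x ∈ U, V.ρ g x ∈ U) : U = ⊥ ∨ U = ⊤ := by
  let ι : FDRep.of (Subrepresentation.toRepresentation ⟨U, hU⟩) ⟶ V :=
    { hom := FGModuleCat.ofHom U.subtype, comm := fun _ => rfl }
  have : Mono ι := ConcreteCategory.mono_of_injective ι Subtype.val_injective
  by_cases hι : ι = 0
  · left
    refine (Submodule.eq_bot_iff U).mpr fun x hx => ?_
    change ι ⟨x, hx⟩ = 0
    rw [hι]
    rfl
  · right
    have : IsIso ι := isIso_of_mono_of_nonzero hι
    refine Submodule.eq_top_iff'.mpr fun x => ?_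
    obtain ⟨y, rfl⟩ := ((ConcreteCategory.isIso_iff_bijective ι).mp this).2 x
    exact y.2

theorem injective_of_ne_zero {W R : FDRep k G} [Simple W] {f : W ⟶ R} (hf : f ≠ 0) :
    Function.Injective f := by
  have hker : ∀ g, ∀ x ∈ LinearMap.ker f.hom.hom.hom,
      W.ρ g x ∈ LinearMap.ker f.hom.hom.hom :=
    fun g x (hx : f x = 0) => show f (W.ρ g x) = 0 by rw [hom_comm_apply, hx, map_zero]
  rcases eq_bot_or_eq_top_of_forall_apply_mem W hker with hbot | htop
  · exact LinearMap.ker_eq_bot.mp hbot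
  · refine absurd ?_ hf
    ext x
    exact LinearMap.ker_eq_top.mp htop ▸ rfl

theorem finrank_hom_le_one_of_finrank_le [IsAlgClosed k] (W R : FDRep k G) [Simple W]
    (h : finrank k R ≤ finrank k W) : finrank k (W ⟶ R) ≤ 1 := by
  rcases subsingleton_or_nontrivial (W ⟶ R) with hR | hR
  · simp [finrank_zero_of_subsingleton]
  · obtain ⟨f, hf⟩ := exists_ne (0 : W ⟶ R)
    have hinj : Function.Injective f.hom.hom.hom := injective_of_ne_zero hf
    have hdim := le_antisymm h (LinearMap.finrank_le_finrank_of_injective hinj)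
    have : IsIso f := (ConcreteCategory.isIso_iff_bijective f).mpr
      ⟨hinj, (LinearMap.injective_iff_surjective_of_finrank_eq_finrank hdim.symm).mp hinj⟩
    have : Simple R := Simple.of_iso (asIso f).symm
    exact finrank_hom_simple_simple_le_one k W R

theorem exists_smul_eq_of_finrank_le_finrank_hom (W R : FDRep k G) (hW : finrank k W = 1)
    (hR : finrank k R ≤ finrank k (W ⟶ R)) (g : G) :
    ∃ c : k, ∀ x : R, R.ρ g x = c • x := by
  obtain ⟨w, hw⟩ := (finrank_pos_iff_exists_ne_zero (R := k) (M := W)).mp (by omega)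
  have hspan := (finrank_eq_one_iff_of_nonzero' w hw).mp hW
  let ev : (W ⟶ R) →ₗ[k] R :=
    { toFun := fun f => f w, map_add' := fun _ _ => rfl, map_smul' := fun _ _ => rfl }
  have hev : Function.Injective ev := by
    refine (injective_iff_map_eq_zero ev).mpr fun f hf => ?_
    ext x
    obtain ⟨c, rfl⟩ := hspan x
    change f.hom.hom.hom (c • w) = 0
    rw [map_smul]
    exact (congrArg (c • ·) hf).trans (smul_zero c)
  have hsurj : Function.Surjective ev :=
    (LinearMap.injective_iff_surjective_of_finrank_eq_finrank
      (le_antisymm (LinearMap.finrank_le_finrank_of_injective hev) hR)).mp hev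
  obtain ⟨c, hc⟩ := hspan (W.ρ g w)
  refine ⟨c, fun x => ?_⟩
  obtain ⟨f, rfl⟩ := hsurj x
  calc R.ρ g (f w) = f (W.ρ g w) := (hom_comm_apply f g w).symm
    _ = c • f w := by rw [← hc]; exact map_smul f.hom.hom.hom c w

end FDRep

namespace DihedralGroup

variable {n : ℕ}

theorem exists_ρ_r_apply_eq_smul (V : FDRep k (DihedralGroup n)) {v : V} {ω : k}
    (hv : V.ρ (r 1) v = ω • v) (j : ZMod n) : ∃ c : k, V.ρ (r j) v = c • v := by
  refine ⟨ω ^ (j.cast : ℤ), ?_⟩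
  rw [← Representation.apply_zpow_eq_zpow_smul V.ρ hv, r_one_zpow, ZMod.intCast_zmod_cast]

theorem ρ_apply_mem_span_pair (V : FDRep k (DihedralGroup n)) {v : V} {ω : k}
    (hv : V.ρ (r 1) v = ω • v) (i : ZMod n) (g : DihedralGroup n) :
    ∀ x ∈ Submodule.span k {v, V.ρ (sr i) v},
      V.ρ g x ∈ Submodule.span k {v, V.ρ (sr i) v} := by
  set U := Submodule.span k {v, V.ρ (sr i) v}
  have hv_mem : v ∈ U := Submodule.subset_span (Set.mem_insert _ _)
  have hw_mem : V.ρ (sr i) v ∈ U := Submodule.subset_span (Set.mem_insert_of_mem _ rfl)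
  have hmul : ∀ a b (x : V), V.ρ (a * b) x = V.ρ a (V.ρ b x) := by simp [map_mul]
  have hr_mem : ∀ j, V.ρ (r j) v ∈ U := fun j => by
    obtain ⟨c, hc⟩ := exists_ρ_r_apply_eq_smul V hv j
    exact hc ▸ U.smul_mem c hv_mem
  have hsr_r_mem : ∀ j, V.ρ (sr i) (V.ρ (r j) v) ∈ U := fun j => by
    obtain ⟨c, hc⟩ := exists_ρ_r_apply_eq_smul V hv j
    rw [hc, map_smul]
    exact U.smul_mem c hw_mem
  refine fun x hx => (Submodule.span_le (p := U.comap (V.ρ g))).mpr ?_ hx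
  rintro _ (rfl | rfl) <;> simp only [SetLike.mem_coe, Submodule.mem_comap]
  · cases g with
    | r j => exact hr_mem j
    | sr j =>
      rw [show sr j = sr i * r (j - i) by rw [sr_mul_r, add_sub_cancel], hmul]
      exact hsr_r_mem _
  · cases g with
    | r j =>
      rw [← hmul, r_mul_sr,
        show sr (i - j) = sr i * r (-j) by rw [sr_mul_r, sub_eq_add_neg], hmul]
      exact hsr_r_mem _
    | sr j =>
      rw [← hmul, sr_mul_sr]
      exact hr_mem _

theorem exists_span_pair_eq_top [IsAlgClosed k] (V : FDRep k (DihedralGroup n)) [Simple V]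
    (i : ZMod n) : ∃ v : V, Submodule.span k {v, V.ρ (sr i) v} = ⊤ := by
  obtain ⟨ω, hω⟩ := Module.End.exists_eigenvalue (V.ρ (r 1))
  obtain ⟨v, hv⟩ := hω.exists_hasEigenvector
  refine ⟨v, (FDRep.eq_bot_or_eq_top_of_forall_apply_mem V
    (ρ_apply_mem_span_pair V hv.apply_eq_smul i)).resolve_left fun hbot => hv.2 ?_⟩
  exact (Submodule.mem_bot k).mp (hbot ▸ Submodule.subset_span (Set.mem_insert _ _))

theorem finrank_le_two_of_simple [IsAlgClosed k] (V : FDRep k (DihedralGroup n)) [Simple V] :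
    finrank k V ≤ 2 := by
  classical
  obtain ⟨v, hv⟩ := exists_span_pair_eq_top V 0
  rw [← finrank_top k V, ← hv, ← Finset.coe_pair]
  exact (finrank_span_finset_le_card _).trans Finset.card_le_two

theorem finrank_le_one_of_ρ_sr_apply_eq_smul [IsAlgClosed k] (V : FDRep k (DihedralGroup n))
    [Simple V] {i : ZMod n} {c : k} (hc : ∀ x, V.ρ (sr i) x = c • x) : finrank k V ≤ 1 := by
  obtain ⟨v, hv⟩ := exists_span_pair_eq_top V i
  have hle : Submodule.span k {v, V.ρ (sr i) v} ≤ k ∙ v :=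
    Submodule.span_le.mpr <| Set.insert_subset_iff.mpr
      ⟨Submodule.mem_span_singleton_self v, by
        simpa [hc] using (k ∙ v).smul_mem c (Submodule.mem_span_singleton_self v)⟩
  rw [← finrank_top k V, ← hv]
  exact (Submodule.finrank_mono hle).trans ((finrank_span_le_card {v}).trans (by simp))

end DihedralGroup

theorem isStrongGelfandPair_of_dihedral_subgroup_general (n : ℕ)
    (H : Subgroup (DihedralGroup n)) (hH : ∃ i : ZMod n, DihedralGroup.sr i ∈ H) :
    IsStrongGelfandPair (DihedralGroup n) H := by
  obtain ⟨i, hi⟩ := hH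
  intro V W _ _
  set R := (Action.res (FGModuleCat ℂ) H.subtype).obj V
  have hRV : finrank ℂ R = finrank ℂ V := rfl
  have hW : 0 < finrank ℂ W := finrank_pos
  have hV : finrank ℂ V ≤ 2 := DihedralGroup.finrank_le_two_of_simple V
  refine not_lt.mp fun hHom => ?_
  rcases le_or_gt (finrank ℂ V) (finrank ℂ W) with hVW | hWV
  · exact absurd (FDRep.finrank_hom_le_one_of_finrank_le W R (hRV ▸ hVW)) hHom.not_ge
  · obtain ⟨c, hc⟩ := FDRep.exists_smul_eq_of_finrank_le_finrank_hom W R (by omega) (by omega)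
      ⟨DihedralGroup.sr i, hi⟩
    have := DihedralGroup.finrank_le_one_of_ρ_sr_apply_eq_smul V hc
    omega

/-- For `n ≥ 1`, every subgroup of `D_{2n}` isomorphic to a dihedral group
(equivalently, every subgroup containing a reflection `b a^i`) is a strong
Gelfand subgroup of `D_{2n}`. -/
theorem isStrongGelfandPair_of_dihedral_subgroup (n : ℕ) (hn : 1 ≤ n)
    (H : Subgroup (DihedralGroup n)) (hH : ∃ i : ZMod n, DihedralGroup.sr i ∈ H) :
    IsStrongGelfandPair (DihedralGroup n) H :=
  isStrongGelfandPair_of_dihedral_subgroup_general n H hH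
end

section
/- Let n ≥ 3 be odd and let m be a divisor of n with 1 < m < n. Then the pair (D_{2n}, ⟨a^{n/m}⟩), where ⟨a^{n/m}⟩ is the cyclic subgroup of order m of the rotation subgroup of D_{2n}, is not a strong Gelfand pair. Consequently, for n odd, no proper subgroup of ⟨a⟩ other than the trivial group fails to be covered: no proper nontrivial subgroup of ⟨a⟩ ≤ D_{2n} is a strong Gelfand subgroup. -/
/-!
Fix `0 < m < n` with `n` odd and let `ψ j = exp (2πi m j / n)`. The dihedral group acts on `ℂ²` by
`r j ↦ diag (ψ j, ψ (-j))` and `sr j ↦ [[0, ψ (-j)], [ψ j, 0]]`. Its character vanishes on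
reflections and equals `ψ j + ψ (-j)` on rotations, so
`∑ χ g * χ g⁻¹ = 2n + ∑ ψ (2j) + ∑ ψ (-2j) = |D_{2n}|` because `ψ²` is nontrivial (`n ∤ 2m`);
hence the representation is irreducible. A subgroup of
rotations whose elements have order dividing `m` acts trivially on it, so the trivial
representation occurs twice in the restriction.
-/

open CategoryTheory

namespace FDRep

variable {k : Type} [Field k] {G : Type} [Group G]

lemma character_trivial (g : G) :
    (FDRep.of (Representation.trivial k G k)).character g = 1 := by
  simp [character]

lemma character_res {H : Type} [Group H] (f : H →* G) (V : FDRep k G) (h : H) :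
    FDRep.character ((Action.res (FGModuleCat k) f).obj V) h = V.character (f h) :=
  rfl

lemma character_eq_finrank_of_mem_ker (V : FDRep k G) {g : G} (hg : g ∈ V.ρ.ker) :
    V.character g = Module.finrank k V := by
  rw [MonoidHom.mem_ker] at hg
  simp [character, hg]

variable [CharZero k] [Finite G]

lemma finrank_hom_trivial_res_of_le_ker (H : Subgroup G) (V : FDRep k G) (hH : H ≤ V.ρ.ker) :
    Module.finrank k (FDRep.of (Representation.trivial k H k) ⟶
      (Action.res (FGModuleCat k) H.subtype).obj V) = Module.finrank k V := by
  have := Fintype.ofFinite H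
  have := invertibleOfNonzero (NeZero.ne (Nat.card H : k))
  rw [← Nat.cast_inj (R := k), ← scalar_product_char_eq_finrank_equivariant]
  simp [character_res, character_trivial, character_eq_finrank_of_mem_ker V (hH _)]

instance simple_trivial [IsAlgClosed k] : Simple (FDRep.of (Representation.trivial k G k)) := by
  have := Fintype.ofFinite G
  rw [simple_iff_char_is_norm_one]
  simp [character_trivial, Nat.card_eq_fintype_card]

end FDRep

theorem not_isStrongGelfandPair_of_le_ker {G : Type} [Group G] [Finite G] {H : Subgroup G}
    (V : FDRep ℂ G) [Simple V] (hV : 1 < Module.finrank ℂ V) (hH : H ≤ V.ρ.ker) :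
    ¬ IsStrongGelfandPair G H := fun h => by
  have := h V (FDRep.of (Representation.trivial ℂ H ℂ)) inferInstance inferInstance
  rw [FDRep.finrank_hom_trivial_res_of_le_ker H V hH] at this
  omega

namespace DihedralGroup

open Subgroup

section AddCharRep

variable {n : ℕ} {k : Type} [Field k] (ψ : AddChar (ZMod n) k)

def addCharMatrix : DihedralGroup n →* Matrix (Fin 2) (Fin 2) k where
  toFun
    | r j => !![ψ j, 0; 0, ψ (-j)]
    | sr j => !![0, ψ (-j); ψ j, 0]
  map_one' := by
    rw [one_def]
    simp [Matrix.one_fin_two]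
  map_mul' g h := by
    rcases g with i | i <;> rcases h with j | j <;>
      simp [← AddChar.map_add_eq_mul, sub_eq_add_neg, add_comm]

/-- The representation induced from the character `r j ↦ ψ j` of the rotation subgroup. -/
def addCharRep : Representation k (DihedralGroup n) (Fin 2 → k) :=
  Matrix.toLinAlgEquiv'.toMonoidHom.comp (addCharMatrix ψ)

lemma character_addCharRep (g : DihedralGroup n) :
    (FDRep.of (addCharRep ψ)).character g = (addCharMatrix ψ g).trace :=
  Matrix.trace_toLin'_eq _

lemma character_addCharRep_r (j : ZMod n) :
    (FDRep.of (addCharRep ψ)).character (r j) = ψ j + ψ (-j) := by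
  simp [character_addCharRep, addCharMatrix, Matrix.trace_fin_two]

lemma character_addCharRep_sr (j : ZMod n) :
    (FDRep.of (addCharRep ψ)).character (sr j) = 0 := by
  simp [character_addCharRep, addCharMatrix, Matrix.trace_fin_two]

lemma addCharRep_r_eq_one {j : ZMod n} (hj : ψ j = 1) : addCharRep ψ (r j) = 1 := by
  simp [addCharRep, addCharMatrix, AddChar.map_neg_eq_inv, hj, Matrix.one_fin_two]

theorem simple_addCharRep [NeZero n] [IsAlgClosed k] [CharZero k] (hψ : ψ ^ 2 ≠ 1) :
    Simple (FDRep.of (addCharRep ψ)) := by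
  have hsq (x : ZMod n) :
      (ψ x + ψ (-x)) * (ψ (-x) + ψ x) = (ψ ^ 2) x + (ψ ^ 2)⁻¹ x + 2 := by
    have h : ψ x * ψ (-x) = 1 := by
      rw [← AddChar.map_add_eq_mul, add_neg_cancel, AddChar.map_zero_eq_one]
    simp only [AddChar.inv_apply, AddChar.pow_apply]
    linear_combination 2 * h
  rw [FDRep.simple_iff_char_is_norm_one, ← Fintype.sum_equiv equivSum.symm _ _ (fun _ => rfl),
    Fintype.sum_sum_type]
  simp only [equivSum_symm_apply, inv_r, inv_sr, neg_neg, character_addCharRep_r,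
    character_addCharRep_sr, mul_zero, Finset.sum_const_zero, add_zero, hsq]
  rw [Finset.sum_add_distrib, Finset.sum_add_distrib, AddChar.sum_eq_zero_of_ne_one hψ,
    AddChar.sum_eq_zero_of_ne_one (inv_ne_one.mpr hψ)]
  simp [card, mul_comm]

lemma le_ker_addCharRep {H : Subgroup (DihedralGroup n)} (hH : H ≤ zpowers (r 1))
    (hψ : ∀ j, r j ∈ H → ψ j = 1) : H ≤ (FDRep.of (addCharRep ψ)).ρ.ker := by
  intro x hx
  obtain ⟨j, rfl⟩ := hH hx
  simp only [r_zpow, one_mul] at hx ⊢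
  exact addCharRep_r_eq_one ψ (hψ _ hx)

end AddCharRep

theorem not_isStrongGelfandPair_of_le_zpowers_r_one {n : ℕ} (hodd : Odd n) {m : ℕ} (hm0 : 0 < m)
    (hmn : m < n) {H : Subgroup (DihedralGroup n)} (hH : H ≤ zpowers (r 1))
    (hexp : ∀ x ∈ H, orderOf x ∣ m) : ¬ IsStrongGelfandPair (DihedralGroup n) H := by
  have : NeZero n := ⟨hodd.pos.ne'⟩
  set ψ := (ZMod.stdAddChar (N := n)).mulShift m
  have hψ : ψ ^ 2 ≠ 1 := by
    rw [AddChar.pow_mulShift, AddChar.mulShift_mulShift]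
    refine ZMod.isPrimitive_stdAddChar n ?_
    rw [← Nat.cast_mul, Ne, ZMod.natCast_eq_zero_iff,
      Nat.Coprime.dvd_mul_right hodd.coprime_two_right]
    exact fun hdvd => (Nat.le_of_dvd hm0 hdvd).not_gt hmn
  have hker : H ≤ (FDRep.of (addCharRep ψ)).ρ.ker := by
    refine le_ker_addCharRep ψ hH fun j hj => ?_
    have hjm := orderOf_dvd_iff_pow_eq_one.mp (hexp _ hj)
    rw [r_pow, one_def, r.injEq] at hjm
    rw [AddChar.mulShift_apply, mul_comm, hjm, AddChar.map_zero_eq_one]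
  have := simple_addCharRep ψ hψ
  exact not_isStrongGelfandPair_of_le_ker (FDRep.of (addCharRep ψ)) (by simp) hker

end DihedralGroup

open DihedralGroup Subgroup in
theorem not_isStrongGelfandPair_dihedral_odd_general (n : ℕ) (hodd : Odd n) :
    (∀ m : ℕ, m ∣ n → 1 < m → m < n →
      ¬ IsStrongGelfandPair (DihedralGroup n)
        (Subgroup.zpowers (DihedralGroup.r 1 ^ (n / m)))) ∧
    (∀ H : Subgroup (DihedralGroup n),
      H < Subgroup.zpowers (DihedralGroup.r 1) → H ≠ ⊥ →
      ¬ IsStrongGelfandPair (DihedralGroup n) H) := by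
  have : NeZero n := ⟨hodd.pos.ne'⟩
  refine ⟨fun m hdvd hm1 hmn => ?_, fun H hlt _ => ?_⟩
  · have hgen : (r 1 ^ (n / m) : DihedralGroup n) ^ m = 1 := by
      rw [← pow_mul, Nat.div_mul_cancel hdvd, r_one_pow, ZMod.natCast_self, one_def]
    exact not_isStrongGelfandPair_of_le_zpowers_r_one hodd (by omega) hmn
      (zpowers_le.mpr (pow_mem (mem_zpowers _) _))
      fun x hx => (orderOf_dvd_of_mem_zpowers hx).trans (orderOf_dvd_of_pow_eq_one hgen)
  · have hcard : Nat.card H < n := by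
      have hrot : Nat.card (zpowers (r 1 : DihedralGroup n)) = n := by
        rw [Nat.card_zpowers, orderOf_r_one]
      refine lt_of_lt_of_eq ?_ hrot
      exact (card_le_of_le hlt.le).lt_of_ne fun h => hlt.ne (eq_of_le_of_card_ge hlt.le h.ge)
    exact not_isStrongGelfandPair_of_le_zpowers_r_one hodd Nat.card_pos hcard hlt.le
      fun x hx => H.orderOf_dvd_natCard hx

/-- For `n ≥ 3` odd and `m ∣ n` with `1 < m < n`, the pair
`(D_{2n}, ⟨a^{n/m}⟩)` is not a strong Gelfand pair; consequently no proper
nontrivial subgroup of `⟨a⟩ ≤ D_{2n}` is a strong Gelfand subgroup. -/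
theorem not_isStrongGelfandPair_dihedral_odd (n : ℕ) (hn : 3 ≤ n) (hodd : Odd n) :
    (∀ m : ℕ, m ∣ n → 1 < m → m < n →
      ¬ IsStrongGelfandPair (DihedralGroup n)
        (Subgroup.zpowers (DihedralGroup.r 1 ^ (n / m)))) ∧
    (∀ H : Subgroup (DihedralGroup n),
      H < Subgroup.zpowers (DihedralGroup.r 1) → H ≠ ⊥ →
      ¬ IsStrongGelfandPair (DihedralGroup n) H) :=
  not_isStrongGelfandPair_dihedral_odd_general n hodd
end

section
/- Every subgroup of a dicyclic group is either cyclic or isomorphic to a dicyclic group. Precisely: for n ≥ 2, every subgroup H of Dic_{4n} is either cyclic or isomorphic to Dic_{4k} for some divisor k of n. -/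
/-!
A subgroup `H` containing no element `xa i` lies in the cyclic group generated by `a 1`.
Otherwise `H` contains some `xa j`, and `H ∩ ⟨a 1⟩` is generated by `a d` for some `d`,
with `d ∣ n` because `(xa j)² = a n`. Then `a i ↦ a (d * i)`, `xa i ↦ xa j * a (d * i)`
embeds `QuaternionGroup (n / d)` into `QuaternionGroup n` with image exactly `H`.
-/

namespace ZMod

def mulLeftHom (d : ℕ) {m N : ℕ} (h : d * m = N) : ZMod m →+ ZMod N :=
  lift m ⟨(Int.castAddHom (ZMod N)).comp (AddMonoidHom.mulLeft (d : ℤ)), by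
    subst h; show (((d * m : ℤ)) : ZMod (d * m)) = 0; exact_mod_cast natCast_self (d * m)⟩

variable {d m N : ℕ} (h : d * m = N)

theorem mulLeftHom_intCast (z : ℤ) : mulLeftHom d h z = ((d * z : ℤ) : ZMod N) := by
  simp [mulLeftHom, lift_coe]

theorem mulLeftHom_natCast (x : ℕ) : mulLeftHom d h x = ((d * x : ℕ) : ZMod N) := by
  simpa using mulLeftHom_intCast h x

theorem mulLeftHom_injective (hd : d ≠ 0) : Function.Injective (mulLeftHom d h) := by
  rw [injective_iff_map_eq_zero]
  intro x hx
  obtain ⟨z, rfl⟩ := intCast_surjective x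
  rw [mulLeftHom_intCast, intCast_zmod_eq_zero_iff_dvd, ← h, Nat.cast_mul,
    mul_dvd_mul_iff_left (by exact_mod_cast hd)] at hx
  rwa [intCast_zmod_eq_zero_iff_dvd]

theorem intCast_mem_range_mulLeftHom_iff (z : ℤ) :
    (z : ZMod N) ∈ (mulLeftHom d h).range ↔ (d : ℤ) ∣ z := by
  constructor
  · rintro ⟨w, hw⟩
    obtain ⟨y, rfl⟩ := intCast_surjective w
    rw [mulLeftHom_intCast, intCast_eq_intCast_iff_dvd_sub] at hw
    have hdN : (d : ℤ) ∣ N := ⟨m, by rw [← h]; push_cast; rfl⟩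
    simpa using dvd_add (hdN.trans hw) (dvd_mul_right (d : ℤ) y)
  · rintro ⟨y, rfl⟩
    exact ⟨y, mulLeftHom_intCast h y⟩

end ZMod

namespace QuaternionGroup

variable {n : ℕ}

theorem a_one_zpow (z : ℤ) : (a 1 : QuaternionGroup n) ^ z = a z := by
  induction z using Int.induction_on with
  | zero => rw [zpow_zero, Int.cast_zero, a_zero]
  | succ z ih => rw [zpow_add_one, ih, a_mul_a]; push_cast; rfl
  | pred z ih =>
    rw [zpow_sub_one, ih, show (a 1)⁻¹ = a (-1) from rfl, a_mul_a]; push_cast; ring_nf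

theorem a_mem_zpowers_a_one (i : ZMod (2 * n)) : a i ∈ Subgroup.zpowers (a 1) :=
  ⟨(i.cast : ℤ), by simp only [a_one_zpow, ZMod.intCast_zmod_cast]⟩

theorem isCyclic_of_forall_xa_notMem {H : Subgroup (QuaternionGroup n)}
    (hH : ∀ i, xa i ∉ H) : IsCyclic H := by
  refine Subgroup.isCyclic_of_le (H' := Subgroup.zpowers (a 1)) fun x hx => ?_
  cases x with
  | a i => exact a_mem_zpowers_a_one i
  | xa i => exact absurd hx (hH i)

theorem exists_forall_a_mem_iff_dvd (H : Subgroup (QuaternionGroup n)) :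
    ∃ d : ℕ, ∀ z : ℤ, a (z : ZMod (2 * n)) ∈ H ↔ (d : ℤ) ∣ z := by
  let T := (H.comap (zpowersHom _ (a 1))).toAddSubgroup'
  obtain ⟨c, hc⟩ := Int.subgroup_cyclic T
  refine ⟨c.natAbs, fun z => ?_⟩
  rw [← Int.mem_zmultiples_iff, Int.zmultiples_natAbs, AddSubgroup.zmultiples_eq_closure, ← hc]
  simp [T, a_one_zpow]

theorem xa_mem_iff_a_sub_mem {H : Subgroup (QuaternionGroup n)} {j : ZMod (2 * n)}
    (hj : xa j ∈ H) (i : ZMod (2 * n)) : xa i ∈ H ↔ a (i - j) ∈ H := by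
  rw [show xa i = xa j * a (i - j) by rw [xa_mul_a, add_sub_cancel], H.mul_mem_cancel_left hj]

section map

variable {k : ℕ} (s : ZMod (2 * k) →+ ZMod (2 * n)) (hs : s k = n) (j : ZMod (2 * n))

def map : QuaternionGroup k →* QuaternionGroup n :=
  MonoidHom.mk'
    (fun
      | a i => a (s i)
      | xa i => xa (j + s i))
    (by
      rintro (i | i) (i' | i') <;>
        simp only [a_mul_a, a_mul_xa, xa_mul_a, xa_mul_xa, map_add, map_sub, hs] <;>
        congr 1 <;> ring)

@[simp]
theorem map_a (i : ZMod (2 * k)) : map s hs j (a i) = a (s i) := rfl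

@[simp]
theorem map_xa (i : ZMod (2 * k)) : map s hs j (xa i) = xa (j + s i) := rfl

theorem map_injective (hinj : Function.Injective s) : Function.Injective (map s hs j) := by
  rintro (i | i) (i' | i') h <;> simp_all [hinj.eq_iff]

theorem range_map {H : Subgroup (QuaternionGroup n)} (hj : xa j ∈ H)
    (hH : ∀ i, a i ∈ H ↔ i ∈ s.range) : (map s hs j).range = H := by
  ext x
  rw [MonoidHom.mem_range]
  cases x with
  | a i =>
    rw [hH, AddMonoidHom.mem_range]
    constructor
    · rintro ⟨i' | i', h⟩
      exacts [⟨i', a.inj h⟩, by simp at h]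
    · rintro ⟨i', rfl⟩
      exact ⟨a i', rfl⟩
  | xa i =>
    rw [xa_mem_iff_a_sub_mem hj, hH, AddMonoidHom.mem_range]
    constructor
    · rintro ⟨i' | i', h⟩
      exacts [by simp at h, ⟨i', by simp at h; rw [← h, add_sub_cancel_left]⟩]
    · rintro ⟨i', hi'⟩
      exact ⟨xa i', by rw [map_xa, hi', add_sub_cancel]⟩

end map

theorem nonempty_mulEquiv_of_xa_mem {H : Subgroup (QuaternionGroup n)} {d k : ℕ}
    (h : d * k = n) (hn : n ≠ 0) {j : ZMod (2 * n)} (hj : xa j ∈ H)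
    (hH : ∀ z : ℤ, a (z : ZMod (2 * n)) ∈ H ↔ (d : ℤ) ∣ z) :
    Nonempty (H ≃* QuaternionGroup k) := by
  have h2 : d * (2 * k) = 2 * n := by rw [← h, mul_left_comm]
  have hd : d ≠ 0 := by rintro rfl; omega
  let s := ZMod.mulLeftHom d h2
  have hs : s k = n := by rw [ZMod.mulLeftHom_natCast, h]
  have hrange : (map s hs j).range = H := range_map s hs j hj fun i => by
    obtain ⟨z, rfl⟩ := ZMod.intCast_surjective i
    rw [hH, ZMod.intCast_mem_range_mulLeftHom_iff]
  have hinj := map_injective s hs j (ZMod.mulLeftHom_injective h2 hd)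
  exact ⟨((MonoidHom.ofInjective hinj).trans (MulEquiv.subgroupCongr hrange)).symm⟩

end QuaternionGroup

open QuaternionGroup

/-- Every subgroup of the dicyclic group `Dic_{4n}` (for `n ≥ 2`) is either
cyclic or isomorphic to a dicyclic group `Dic_{4k}` for some divisor `k` of `n`. -/
theorem dicyclic_subgroup_cyclic_or_dicyclic (n : ℕ) (hn : 2 ≤ n)
    (H : Subgroup (QuaternionGroup n)) :
    IsCyclic H ∨ ∃ k : ℕ, k ∣ n ∧ Nonempty (H ≃* QuaternionGroup k) := by
  by_cases hxa : ∃ j, xa j ∈ H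
  · obtain ⟨j, hj⟩ := hxa
    obtain ⟨d, hd⟩ := exists_forall_a_mem_iff_dvd H
    have hdn : d ∣ n := by exact_mod_cast (hd n).1 (by simpa [xa_sq] using H.pow_mem hj 2)
    exact Or.inr ⟨n / d, Nat.div_dvd_of_dvd hdn,
      nonempty_mulEquiv_of_xa_mem (Nat.mul_div_cancel' hdn) (by omega) hj hd⟩
  · exact Or.inl (isCyclic_of_forall_xa_notMem fun i hi => hxa ⟨i, hi⟩)
end
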